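/- arXiv:1703.01180 — 3 statements merged into one kernel-verified Lean document; each statement's English description precedes it below -/
import Mathlib

section
/- A one-step Runge-Kutta method with s stages applied to a linear Hamiltonian system on ℝ^{2n} preserves the standard symplectic form whenever its coefficients satisfy b_i a_{ij} + b_j a_{ji} - b_i b_j = 0 for all 1 ≤ i, j ≤ s. -/
open Matrix

/-- An `s`-stage Runge-Kutta method with coefficients `a`, weights `b`, step `h`,
applied to the linear Hamiltonian system `x' = J S x` on `ℝ^{2n}` (`J` the standard
symplectic matrix, `S` symmetric), preserves the standard symplectic form whenever
`bᵢ aᵢⱼ + bⱼ aⱼᵢ - bᵢ bⱼ = 0` for all `i, j`.  The stage matrices `K i` implement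
`Xᵢ = x + h Σⱼ aᵢⱼ (J S) Xⱼ` and the update matrix `Φ` implements
`x_{n+1} = x + h Σᵢ bᵢ (J S) Xᵢ`. -/
theorem stmt3 (n s : ℕ) (S : Matrix (Fin n ⊕ Fin n) (Fin n ⊕ Fin n) ℝ)
    (hS : Sᵀ = S) (a : Fin s → Fin s → ℝ) (b : Fin s → ℝ) (h : ℝ)
    (J : Matrix (Fin n ⊕ Fin n) (Fin n ⊕ Fin n) ℝ)
    (hJ : J = Matrix.fromBlocks 0 1 (-1) 0)
    (K : Fin s → Matrix (Fin n ⊕ Fin n) (Fin n ⊕ Fin n) ℝ)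
    (hK : ∀ i, K i = 1 + h • ∑ j, a i j • (J * S * K j))
    (Φ : Matrix (Fin n ⊕ Fin n) (Fin n ⊕ Fin n) ℝ)
    (hΦ : Φ = 1 + h • ∑ i, b i • (J * S * K i))
    (hcond : ∀ i j, b i * a i j + b j * a j i - b i * b j = 0) :
    Φᵀ * J * Φ = J := by
  have hJt : Jᵀ = -J := by
    subst hJ; rw [Matrix.fromBlocks_transpose, Matrix.fromBlocks_neg]; simp
  have hJJ : J * J = -1 := by
    subst hJ
    rw [Matrix.fromBlocks_multiply,
      show (-1 : Matrix _ _ ℝ) = -(Matrix.fromBlocks 1 0 0 1) by rw [Matrix.fromBlocks_one],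
      Matrix.fromBlocks_neg]
    simp
  set L : Fin s → Matrix (Fin n ⊕ Fin n) (Fin n ⊕ Fin n) ℝ := fun i => J * S * K i with hL
  have hLtJ : ∀ i, (L i)ᵀ * J = (K i)ᵀ * S := by
    intro i
    have e : (L i)ᵀ = (K i)ᵀ * (Sᵀ * Jᵀ) := by
      simp [hL, Matrix.transpose_mul, Matrix.mul_assoc]
    rw [e, Matrix.mul_assoc, hS, hJt, Matrix.mul_assoc,
      show -J * J = (1 : Matrix _ _ ℝ) by rw [Matrix.neg_mul, hJJ, neg_neg],
      Matrix.mul_one]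
  have hJL : ∀ i, J * L i = -(S * K i) := by
    intro i
    calc J * L i = (J * J) * (S * K i) := by simp only [hL, Matrix.mul_assoc]
      _ = -(S * K i) := by rw [hJJ]; simp
  set T : Fin s → Fin s → Matrix (Fin n ⊕ Fin n) (Fin n ⊕ Fin n) ℝ :=
    fun i j => (L i)ᵀ * J * L j with hT
  have hcross : ∀ i, (L i)ᵀ * J * K i + (K i)ᵀ * (J * L i) = 0 := by
    intro i
    rw [hLtJ i, hJL i, Matrix.mul_neg, Matrix.mul_assoc]
    simp
  have hkey : ∀ i, (L i)ᵀ * J + J * L i = -(h • ∑ j, a i j • (T i j + T j i)) := by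
    intro i
    have e1 : (L i)ᵀ * J * K i = (L i)ᵀ * J + h • ∑ j, a i j • T i j := by
      nth_rewrite 1 [hK i]
      simp [Matrix.mul_add, Matrix.mul_sum, Matrix.mul_smul, hT, hL, Matrix.mul_assoc]
    have e2 : (K i)ᵀ * (J * L i) = J * L i + h • ∑ j, a i j • T j i := by
      nth_rewrite 1 [hK i]
      simp [Matrix.transpose_add, Matrix.transpose_smul, Matrix.transpose_sum,
        Matrix.add_mul, Matrix.sum_mul, Matrix.smul_mul, hT, hL,
        Matrix.transpose_mul, hS, Matrix.mul_assoc]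
    have sum0 : ((L i)ᵀ * J + h • ∑ j, a i j • T i j)
        + (J * L i + h • ∑ j, a i j • T j i) = 0 := by
      rw [← e1, ← e2]; exact hcross i
    have expand : h • ∑ j, a i j • (T i j + T j i)
        = (h • ∑ j, a i j • T i j) + (h • ∑ j, a i j • T j i) := by
      simp [smul_add, Finset.sum_add_distrib]
    rw [expand, ← sub_eq_zero]
    calc ((L i)ᵀ * J + J * L i) - -((h • ∑ j, a i j • T i j) + (h • ∑ j, a i j • T j i))
        = ((L i)ᵀ * J + h • ∑ j, a i j • T i j)
          + (J * L i + h • ∑ j, a i j • T j i) := by abel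
      _ = 0 := sum0
  set A : Matrix (Fin n ⊕ Fin n) (Fin n ⊕ Fin n) ℝ := ∑ i, b i • L i with hA
  have hAtJ : Aᵀ * J = ∑ i, b i • ((L i)ᵀ * J) := by
    simp [hA, Matrix.transpose_sum, Matrix.sum_mul, Matrix.smul_mul]
  have hJA : J * A = ∑ i, b i • (J * L i) := by
    simp [hA, Matrix.mul_sum, Matrix.mul_smul]
  have hAJA : Aᵀ * J * A = ∑ i, ∑ j, (b i * b j) • T i j := by
    rw [hAtJ, Matrix.sum_mul]
    refine Finset.sum_congr rfl fun i _ => ?_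
    simp [hA, Matrix.smul_mul, Matrix.mul_sum, Matrix.mul_smul, Finset.smul_sum,
      smul_smul, hT, hL, Matrix.mul_assoc]
  have hexp : Φᵀ * J * Φ = J + (h • (Aᵀ * J + J * A) + (h * h) • (Aᵀ * J * A)) := by
    rw [hΦ]
    simp only [Matrix.transpose_add, Matrix.transpose_one, Matrix.transpose_smul,
      Matrix.add_mul, Matrix.mul_add, Matrix.one_mul, Matrix.mul_one,
      Matrix.smul_mul, Matrix.mul_smul, smul_add, smul_smul, Matrix.mul_assoc]
    abel
  have hsum : ∑ i, ∑ j, (b i * b j) • T i j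
      = (∑ i, ∑ j, (b i * a i j) • T i j) + (∑ i, ∑ j, (b j * a j i) • T i j) := by
    rw [← Finset.sum_add_distrib]
    refine Finset.sum_congr rfl fun i _ => ?_
    rw [← Finset.sum_add_distrib]
    refine Finset.sum_congr rfl fun j _ => ?_
    rw [← add_smul]
    congr 1
    have := hcond i j; linarith
  have hswap : ∑ i, ∑ j, (b j * a j i) • T i j = ∑ i, ∑ j, (b i * a i j) • T j i := by
    rw [Finset.sum_comm]
  have hW : ∑ i, ∑ j, (b i * a i j) • (T i j + T j i) = Aᵀ * J * A := by
    rw [hAJA, hsum, hswap]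
    simp [smul_add, Finset.sum_add_distrib]
  have hAJsum : Aᵀ * J + J * A = -(h • (Aᵀ * J * A)) := by
    conv_lhs => rw [hAtJ, hJA, ← Finset.sum_add_distrib]
    rw [← hW]
    have : ∀ i, b i • ((L i)ᵀ * J) + b i • (J * L i)
        = -(h • ∑ j, (b i * a i j) • (T i j + T j i)) := by
      intro i
      rw [← smul_add, hkey i, smul_neg, smul_comm (b i) h]
      congr 2
      rw [Finset.smul_sum]
      exact Finset.sum_congr rfl fun j _ => smul_smul _ _ _
    rw [Finset.sum_congr rfl fun i _ => this i]
    rw [Finset.smul_sum]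
    simp [Finset.smul_sum, smul_smul]
  rw [hexp, hAJsum]
  simp [smul_smul, smul_neg]
end

section
/- The Lie-Trotter integrator for the symmetric free rigid body does not preserve the energy H(m) = (m₁²/I₁ + m₂²/I₁ + m₃²/I₃)/2 in general: there exist I₁ > I₃ > 0, an angle parameter t, and m ∈ ℝ³ such that H((M N P) m) ≠ H(m). -/
open Matrix

noncomputable def rotM (a : ℝ) : Matrix (Fin 3) (Fin 3) ℝ :=
  Matrix.of ![![1, 0, 0], ![0, Real.cos a, Real.sin a], ![0, -Real.sin a, Real.cos a]]

noncomputable def rotN (b : ℝ) : Matrix (Fin 3) (Fin 3) ℝ :=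
  Matrix.of ![![Real.cos b, 0, -Real.sin b], ![0, 1, 0], ![Real.sin b, 0, Real.cos b]]

noncomputable def rotP (c : ℝ) : Matrix (Fin 3) (Fin 3) ℝ :=
  Matrix.of ![![Real.cos c, Real.sin c, 0], ![-Real.sin c, Real.cos c, 0], ![0, 0, 1]]

/-- The energy of the symmetric free rigid body. -/
noncomputable def rbH (I₁ I₃ : ℝ) (m : Fin 3 → ℝ) : ℝ :=
  (m 0 ^ 2 / I₁ + m 1 ^ 2 / I₁ + m 2 ^ 2 / I₃) / 2

/-- The Lie-Trotter integrator for the symmetric free rigid body does not preserve the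
energy in general: there are `I₁ > I₃ > 0`, a step `t` and a point `m` with
`H((M N P) m) ≠ H(m)`, where the angles are `m₁t/I₁`, `m₂t/I₁`, `m₃t/I₃`. -/
theorem stmt12 :
    ∃ (I₁ I₃ t : ℝ) (m : Fin 3 → ℝ), I₁ > I₃ ∧ I₃ > 0 ∧
      rbH I₁ I₃ ((rotM (m 0 * t / I₁) * rotN (m 1 * t / I₁) * rotP (m 2 * t / I₃)) *ᵥ m) ≠
        rbH I₁ I₃ m := by
  refine ⟨2, 1, Real.pi, ![0, 1, 1], by norm_num, by norm_num, ?_⟩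
  have h1 : (0 : ℝ) * Real.pi / 2 = 0 := by ring
  have h2 : (1 : ℝ) * Real.pi / 2 = Real.pi / 2 := by ring
  have h3 : (1 : ℝ) * Real.pi / 1 = Real.pi := by ring
  simp only [Matrix.cons_val_zero, Matrix.cons_val_one, Matrix.head_cons,
    Matrix.cons_val_two, Matrix.tail_cons, h1, h2, h3, rotM, rotN, rotP, rbH,
    Real.cos_zero, Real.sin_zero, Real.cos_pi, Real.sin_pi, Real.cos_pi_div_two,
    Real.sin_pi_div_two, Matrix.mulVec, Matrix.mul_apply, Fin.sum_univ_three,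
    dotProduct, Matrix.of_apply]
  norm_num [Fin.sum_univ_three, Matrix.mulVec, dotProduct, Matrix.mul_apply]
end

section
/- If the Poisson matrix Π on ℝⁿ is constant, then the implicit midpoint (Gauss-Legendre) integrator for any smooth Hamiltonian H is a Poisson integrator: its derivative D φ_h(x) satisfies D φ_h(x) Π D φ_h(x)ᵀ = Π wherever φ_h is well-defined and differentiable. -/
open Matrix

lemma stmt14_alg {n : ℕ} (A J P : Matrix (Fin n) (Fin n) ℝ)
    (h1 : J - 1 = A * (1 + J)) (h2 : A * P + P * Aᵀ = 0) :
    J * P * Jᵀ = P := by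
  set B := (2⁻¹ : ℝ) • (1 + J) with hB
  have hBl : (1 - A) * B = 1 := by
    have e1 : (1 - A) * (1 + J) = 1 + 1 := by
      rw [sub_mul, one_mul, ← h1]; abel
    rw [hB, Matrix.mul_smul, e1, ← two_smul ℝ (1 : Matrix (Fin n) (Fin n) ℝ), smul_smul]
    norm_num
  have hBr : B * (1 - A) = 1 := mul_eq_one_comm.mp hBl
  have hAJ : A * J = J - 1 - A := by
    have := h1
    rw [mul_add, mul_one] at this
    rw [eq_sub_iff_add_eq]
    linear_combination (norm := abel) this.symm
  have h3 : (1 - A) * J = 1 + A := by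
    rw [sub_mul, one_mul, hAJ]; abel
  have hJ : J = B * (1 + A) := by
    calc J = (B * (1 - A)) * J := by rw [hBr, one_mul]
    _ = B * ((1 - A) * J) := by rw [mul_assoc]
    _ = B * (1 + A) := by rw [h3]
  have hPA : P * Aᵀ = -(A * P) := by
    linear_combination (norm := abel) h2
  have hQ : (1 + A) * P * (1 + A)ᵀ = (1 - A) * P * (1 - A)ᵀ := by
    simp only [transpose_add, transpose_sub, transpose_one, Matrix.add_mul, Matrix.mul_add,
      Matrix.sub_mul, Matrix.mul_sub, Matrix.one_mul, Matrix.mul_one, hPA]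
    abel
  calc J * P * Jᵀ = B * ((1 + A) * P * (1 + A)ᵀ) * Bᵀ := by
        rw [hJ]; simp only [transpose_mul]; noncomm_ring
    _ = B * ((1 - A) * P * (1 - A)ᵀ) * Bᵀ := by rw [hQ]
    _ = (B * (1 - A)) * P * ((B * (1 - A))ᵀ) := by
        simp only [transpose_mul]; noncomm_ring
    _ = P := by rw [hBr]; simp

/-- The matrix of the Fréchet derivative of a map of ℝⁿ at a point. -/
noncomputable def jacMat {n : ℕ} (f : (Fin n → ℝ) → (Fin n → ℝ)) (x : Fin n → ℝ) :
    Matrix (Fin n) (Fin n) ℝ :=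
  LinearMap.toMatrix' (fderiv ℝ f x : (Fin n → ℝ) →ₗ[ℝ] (Fin n → ℝ))

/-- If the Poisson matrix `Π` is constant (skew-symmetric), then the implicit midpoint
(Gauss-Legendre) integrator `φ`, characterized by `φ(x) - x = h Π ∇H((x + φ(x))/2)`
(assumed well-defined and smooth), is a Poisson integrator:
`Dφ(x) Π Dφ(x)ᵀ = Π` for all `x`. -/
theorem stmt14 (n : ℕ) (P : Matrix (Fin n) (Fin n) ℝ) (hskew : Pᵀ = -P)
    (H : (Fin n → ℝ) → ℝ) (hH : ContDiff ℝ (⊤ : ℕ∞) H)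
    (g : (Fin n → ℝ) → (Fin n → ℝ))
    (hg : ∀ x v, fderiv ℝ H x v = g x ⬝ᵥ v)
    (h : ℝ) (φ : (Fin n → ℝ) → (Fin n → ℝ)) (hφ : ContDiff ℝ (⊤ : ℕ∞) φ)
    (hmid : ∀ x, φ x - x = h • (P *ᵥ g ((x + φ x) / 2))) :
    ∀ x, jacMat φ x * P * (jacMat φ x)ᵀ = P := by
  classical
  have hgdef : g = fun y i => fderiv ℝ H y (Pi.single i 1) := by
    funext y i
    rw [hg y (Pi.single i 1), dotProduct_single, mul_one]
  have hgC : ContDiff ℝ (⊤ : ℕ∞) g := by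
    rw [hgdef]
    apply contDiff_pi.mpr
    intro i
    exact (ContinuousLinearMap.apply ℝ ℝ (Pi.single i 1)).contDiff.comp
      (hH.fderiv_right (m := ((⊤ : ℕ∞) : WithTop ℕ∞)) (by exact_mod_cast (le_top : (⊤ : ℕ∞) + 1 ≤ ⊤)))
  have hφd : Differentiable ℝ φ := hφ.differentiable (by simp)
  have hgd : Differentiable ℝ g := hgC.differentiable (by simp)
  have hHd : Differentiable ℝ (fderiv ℝ H) := (hH.fderiv_right (m := 1) (by exact (WithTop.coe_le_coe.mpr le_top : ((((1 + 1 : ℕ) : ℕ∞) : WithTop ℕ∞) ≤ ((⊤ : ℕ∞) : WithTop ℕ∞))))).differentiable one_ne_zero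
  have hdiv : ∀ v : Fin n → ℝ, v / 2 = (2⁻¹ : ℝ) • v := by
    intro v; funext i
    simp [div_eq_inv_mul]
  intro x
  set σ : (Fin n → ℝ) → (Fin n → ℝ) := fun y => (2⁻¹ : ℝ) • (y + φ y) with hσ
  set m : Fin n → ℝ := σ x with hmm
  -- derivative of `g` in terms of the second derivative of `H`
  have hgfd : ∀ v i, fderiv ℝ g m v i = fderiv ℝ (fderiv ℝ H) m v (Pi.single i 1) := by
    intro v i
    have hcomp : ∀ i : Fin n, fderiv ℝ (fun y => fderiv ℝ H y (Pi.single i 1)) m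
        = (ContinuousLinearMap.apply ℝ ℝ (Pi.single i 1)).comp (fderiv ℝ (fderiv ℝ H) m) := by
      intro i
      have := fderiv_comp (𝕜 := ℝ) m
        ((ContinuousLinearMap.apply ℝ ℝ (Pi.single i 1)).differentiableAt) (hHd m)
      simpa [Function.comp_def, ContinuousLinearMap.fderiv] using this
    have hdi : ∀ i : Fin n, DifferentiableAt ℝ (fun y => fderiv ℝ H y (Pi.single i 1)) m := by
      intro i
      exact ((ContinuousLinearMap.apply ℝ ℝ (Pi.single i 1)).differentiableAt).comp m (hHd m)
    conv_lhs => rw [hgdef]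
    rw [fderiv_pi hdi]
    simp [hcomp]
  -- symmetry of the Hessian matrix
  have hGsym : (jacMat g m)ᵀ = jacMat g m := by
    have hsym : ∀ v w, fderiv ℝ (fderiv ℝ H) m v w = fderiv ℝ (fderiv ℝ H) m w v :=
      (hH.contDiffAt).isSymmSndFDerivAt (by rw [minSmoothness_of_isRCLikeNormedField]; exact (WithTop.coe_le_coe.mpr le_top : (((2 : ℕ∞) : WithTop ℕ∞) ≤ ((⊤ : ℕ∞) : WithTop ℕ∞))))
    ext i j
    have hb : ∀ j : Fin n, (fun j' => if j' = j then (1:ℝ) else 0) = Pi.single j 1 := by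
      intro j; funext j'; simp [Pi.single_apply]
    simp only [transpose_apply, jacMat, LinearMap.toMatrix'_apply,
      ContinuousLinearMap.coe_coe, hb]
    rw [hgfd, hgfd, hsym]
  -- differentiate the midpoint relation
  have hσd : DifferentiableAt ℝ σ x := by
    apply DifferentiableAt.fun_const_smul
    exact differentiableAt_id.add (hφd x)
  have hσf : fderiv ℝ σ x
      = (2⁻¹ : ℝ) • (ContinuousLinearMap.id ℝ (Fin n → ℝ) + fderiv ℝ φ x) := by
    have : HasFDerivAt σ ((2⁻¹ : ℝ) • (ContinuousLinearMap.id ℝ (Fin n → ℝ) + fderiv ℝ φ x)) x :=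
      ((hasFDerivAt_id x).add (hφd x).hasFDerivAt).const_smul (2⁻¹ : ℝ)
    exact this.fderiv
  set e : (Fin n → ℝ) →L[ℝ] (Fin n → ℝ) :=
    LinearMap.toContinuousLinearMap (Matrix.mulVecLin P) with he
  have heP : LinearMap.toMatrix' ((e : (Fin n → ℝ) →ₗ[ℝ] (Fin n → ℝ))) = P := by
    rw [he, LinearMap.coe_toContinuousLinearMap, ← Matrix.toLin'_apply',
      LinearMap.toMatrix'_toLin']
  have hfun : (fun y => φ y - y) = fun y => h • e (g (σ y)) := by
    funext y
    rw [hmid y]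
    congr 1
    rw [hσ]
    have : (y + φ y) / 2 = (2⁻¹ : ℝ) • (y + φ y) := hdiv _
    rw [this]
    rfl
  have key : fderiv ℝ φ x - ContinuousLinearMap.id ℝ (Fin n → ℝ)
      = h • (e.comp ((fderiv ℝ g m).comp
          ((2⁻¹ : ℝ) • (ContinuousLinearMap.id ℝ (Fin n → ℝ) + fderiv ℝ φ x)))) := by
    have lhs : fderiv ℝ (fun y => φ y - y) x
        = fderiv ℝ φ x - ContinuousLinearMap.id ℝ (Fin n → ℝ) :=
      ((hφd x).hasFDerivAt.sub (hasFDerivAt_id x)).fderiv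
    have hgσd : DifferentiableAt ℝ (fun y => g (σ y)) x := (hgd m).comp x hσd
    have hgσf : fderiv ℝ (fun y => g (σ y)) x = (fderiv ℝ g m).comp (fderiv ℝ σ x) := by
      have := fderiv_comp (𝕜 := ℝ) x (hgd m) hσd
      simpa [Function.comp_def] using this
    have hegd : DifferentiableAt ℝ (fun y => e (g (σ y))) x :=
      e.differentiableAt.comp x hgσd
    have rhs : fderiv ℝ (fun y => h • e (g (σ y))) x
        = h • (e.comp ((fderiv ℝ g m).comp (fderiv ℝ σ x))) := by
      rw [fderiv_fun_const_smul hegd]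
      congr 1
      have := fderiv_comp (𝕜 := ℝ) x e.differentiableAt hgσd
      simp only [Function.comp_def] at this
      rw [this, ContinuousLinearMap.fderiv, hgσf]
    rw [← hσf, ← lhs, ← rhs, hfun]
  -- convert to matrices
  have matEq : jacMat φ x - 1 = ((h * 2⁻¹) • (P * jacMat g m)) * (1 + jacMat φ x) := by
    have := congrArg (fun L : (Fin n → ℝ) →L[ℝ] (Fin n → ℝ) =>
      LinearMap.toMatrix' (L : (Fin n → ℝ) →ₗ[ℝ] (Fin n → ℝ))) key
    simp only [ContinuousLinearMap.coe_sub, ContinuousLinearMap.coe_smul,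
      ContinuousLinearMap.toLinearMap_comp, ContinuousLinearMap.coe_add, ContinuousLinearMap.coe_id,
      map_sub, _root_.map_smul, map_add, LinearMap.toMatrix'_comp, LinearMap.toMatrix'_id,
      heP] at this
    rw [jacMat, jacMat, this]
    rw [Matrix.mul_smul, Matrix.mul_smul, smul_smul, Matrix.smul_mul, Matrix.mul_assoc]
  -- the skew condition
  set A : Matrix (Fin n) (Fin n) ℝ := (h * 2⁻¹) • (P * jacMat g m) with hA
  have h2 : A * P + P * Aᵀ = 0 := by
    rw [hA, transpose_smul, transpose_mul, hGsym, hskew]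
    rw [Matrix.smul_mul, Matrix.mul_smul]
    rw [Matrix.mul_assoc, Matrix.mul_neg, ← Matrix.mul_assoc]
    simp [Matrix.mul_assoc]
  exact stmt14_alg A (jacMat φ x) P matEq h2
end
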